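/- arXiv:2312.06443 — 5 statements merged into one kernel-verified Lean document; each statement's English description precedes it below -/
import Mathlib

section
/- Every nonempty compact subset U of ℝ^n contains a leximin-optimal element. -/
/-!
Sorting is monotone in each argument and commutes with adding a constant, so each order statistic
`x ↦ sortVec x j` is 1-Lipschitz for the sup norm. Leximin domination is the strict lexicographic
order on sorted vectors, and a continuous map on a compact set attains a lexicographic maximum:
maximise the first coordinate, then the second on the (compact, nonempty) set of maximisers, and
so on.
-/

/-- The vector `x` sorted in nondecreasing order. -/
noncomputable def sortVec {n : ℕ} (x : Fin n → ℝ) : Fin n → ℝ := x ∘ Tuple.sort x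

/-- `x` leximin-dominates `y`. -/
def LexDom {n : ℕ} (x y : Fin n → ℝ) : Prop :=
  ∃ k : Fin n, (∀ j : Fin n, j < k → sortVec x j = sortVec y j) ∧ sortVec y k < sortVec x k

section LexMax

variable {α β : Type*} [TopologicalSpace α] [LinearOrder β] [TopologicalSpace β]
  [OrderClosedTopology β]

theorem IsCompact.isCompact_setOf_isMaxOn {K : Set α} (hK : IsCompact K) {f : α → β}
    (hf : Continuous f) : IsCompact {x ∈ K | IsMaxOn f K x} := by
  have hclosed : IsClosed {x | IsMaxOn f K x} := by
    simp only [isMaxOn_iff, Set.ofPred_forall]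
    exact isClosed_biInter fun y _ ↦ isClosed_le continuous_const hf
  exact hK.inter_right hclosed

theorem IsCompact.exists_forall_not_toLex_lt {n : ℕ} {K : Set α} (hK : IsCompact K)
    (hne : K.Nonempty) {f : α → Fin n → β} (hf : Continuous f) :
    ∃ x ∈ K, ∀ y ∈ K, ¬ toLex (f x) < toLex (f y) := by
  induction n generalizing K with
  | zero =>
    obtain ⟨x, hx⟩ := hne
    exact ⟨x, hx, fun _ _ ⟨i, _⟩ ↦ i.elim0⟩
  | succ n ih =>
    have hf₀ : Continuous fun x ↦ f x 0 := (continuous_apply 0).comp hf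
    set K₀ := {x ∈ K | IsMaxOn (fun x ↦ f x 0) K x}
    have hK₀ne : K₀.Nonempty := hK.exists_isMaxOn hne hf₀.continuousOn
    obtain ⟨x, ⟨hxK, hxmax⟩, hxlex⟩ := ih (hK.isCompact_setOf_isMaxOn hf₀) hK₀ne
      (f := fun x ↦ Fin.tail (f x)) (continuous_pi fun i ↦ (continuous_apply i.succ).comp hf)
    refine ⟨x, hxK, fun y hyK hlt ↦ ?_⟩
    have hlt' : Pi.Lex (· < ·) (· < ·) (Fin.cons (f x 0) (Fin.tail (f x)) : Fin (n + 1) → β)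
        (Fin.cons (f y 0) (Fin.tail (f y))) := by
      rwa [Fin.cons_self_tail, Fin.cons_self_tail]
    rcases (Fin.pi_lex_lt_cons_cons _).mp hlt' with h₀ | ⟨h₀, htail⟩
    · exact (hxmax hyK).not_gt h₀
    · have hyK₀ : y ∈ K₀ := ⟨hyK, fun z hz ↦ (hxmax hz).trans h₀.le⟩
      exact hxlex y hyK₀ htail

end LexMax

section SortVec

open Finset

variable {n : ℕ}

theorem sortVec_le_iff [DecidableLE ℝ] (x : Fin n → ℝ) (c : ℝ) (j : Fin n) :
    sortVec x j ≤ c ↔ j < #{i | x i ≤ c} := by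
  unfold sortVec
  rw [← Tuple.lt_card_le_iff_apply_le_of_monotone (Tuple.monotone_sort x)]
  exact iff_of_eq <| congrArg _ <| card_equiv (Tuple.sort x) (by simp)

theorem sortVec_mono : Monotone (sortVec : (Fin n → ℝ) → Fin n → ℝ) := by
  classical
  intro x y hxy j
  rw [sortVec_le_iff]
  refine ((sortVec_le_iff y _ j).mp le_rfl).trans_le (card_le_card fun i ↦ ?_)
  simpa only [mem_filter, mem_univ, true_and] using (hxy i).trans

theorem sortVec_comp_of_monotone {g : ℝ → ℝ} (hg : Monotone g) (x : Fin n → ℝ) :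
    sortVec (g ∘ x) = g ∘ sortVec x :=
  (Tuple.comp_sort_eq_comp_iff_monotone.mpr (hg.comp (Tuple.monotone_sort x))).symm

theorem lipschitzWith_sortVec_apply (j : Fin n) : LipschitzWith 1 fun x ↦ sortVec x j := by
  refine LipschitzWith.of_le_add fun x y ↦ ?_
  have hxy : x ≤ (· + dist x y) ∘ y := fun i ↦ sub_le_iff_le_add'.mp <|
    (le_abs_self _).trans ((Real.dist_eq _ _).symm.trans_le (dist_le_pi_dist x y i))
  calc sortVec x j ≤ sortVec ((· + dist x y) ∘ y) j := sortVec_mono hxy j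
    _ = sortVec y j + dist x y := by
      rw [sortVec_comp_of_monotone fun _ _ ↦ (add_le_add_left · _)]
      rfl

theorem continuous_sortVec : Continuous (sortVec : (Fin n → ℝ) → Fin n → ℝ) :=
  continuous_pi fun j ↦ (lipschitzWith_sortVec_apply j).continuous

theorem lexDom_iff {x y : Fin n → ℝ} : LexDom x y ↔ toLex (sortVec y) < toLex (sortVec x) := by
  simp only [LexDom, eq_comm (a := sortVec x _)]
  rfl

end SortVec

/-- Every nonempty compact subset of ℝ^n contains a leximin-optimal element. -/
theorem exists_leximinOpt_of_compact (n : ℕ) (U : Set (Fin n → ℝ))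
    (hne : U.Nonempty) (hc : IsCompact U) :
    ∃ π ∈ U, ∀ π' ∈ U, ¬ LexDom π' π := by
  obtain ⟨π, hπ, hmax⟩ := hc.exists_forall_not_toLex_lt hne continuous_sortVec
  exact ⟨π, hπ, fun π' hπ' hdom ↦ hmax π' hπ' (lexDom_iff.mp hdom)⟩
end

section
/- The bound π^BLO_i ≥ (1/|W|) · π*_i is tight: for every integer k ≥ 2 there exists a combinatorial auction with winner set W of size k and a winner i ∈ W such that π*_i = max{π_i : π ∈ U} > 0 and the leximin-optimal element π^BLO of the core U satisfies π^BLO_i = π*_i / k. -/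
/-- The core polytope of a coalition value function `w`. -/
def CorePoly {n : ℕ} (w : Finset (Fin n) → ℝ) : Set (Fin n → ℝ) :=
  {π | (∀ i, 0 ≤ π i) ∧ ∀ S : Finset (Fin n), ∑ i ∈ Finset.univ \ S, π i ≤ w Finset.univ - w S}

/-- An allocation to the coalition `S`: pairwise disjoint bundles of items. -/
def IsAlloc {n m : ℕ} (S : Finset (Fin n)) (a : Fin n → Finset (Fin m)) : Prop :=
  ∀ i ∈ S, ∀ j ∈ S, i ≠ j → Disjoint (a i) (a j)

/-- The coalition value: the maximum total value over allocations to `S`. -/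
noncomputable def coalW {n m : ℕ} (v : Fin n → Finset (Fin m) → ℝ) (S : Finset (Fin n)) : ℝ :=
  sSup (Set.image (fun a : Fin n → Finset (Fin m) => ∑ i ∈ S, v i (a i)) {a | IsAlloc S a})

/-- The set of winners: bidders whose removal strictly decreases the optimal welfare. -/
noncomputable def winners {n m : ℕ} (v : Fin n → Finset (Fin m) → ℝ) : Finset (Fin n) :=
  @Finset.filter _ (fun i => coalW v (Finset.univ \ {i}) < coalW v Finset.univ)
    (Classical.decPred _) Finset.univ

open Finset Function

section Leximin

variable {n : ℕ}

lemma sum_sortVec (x : Fin n → ℝ) : ∑ j, sortVec x j = ∑ j, x j :=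
  Equiv.sum_comp (Tuple.sort x) x

lemma sortVec_zero_le (x : Fin (n + 1) → ℝ) (i : Fin (n + 1)) : sortVec x 0 ≤ x i := by
  simpa [sortVec] using Tuple.monotone_sort x (Fin.zero_le ((Tuple.sort x).symm i))

lemma sortVec_eq_of_eq_off {y : Fin (n + 1) → ℝ} {i₀ : Fin (n + 1)} {c : ℝ}
    (hy : ∀ j ≠ i₀, y j = c) (hlt : y i₀ < c) (j : Fin (n + 1)) :
    sortVec y j = if j = 0 then y i₀ else c := by
  have hsort : Tuple.sort y 0 = i₀ := by
    by_contra hne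
    have := sortVec_zero_le y i₀
    simp only [sortVec, Function.comp_apply, hy _ hne] at this
    linarith
  split_ifs with hj
  · simp [sortVec, hj, hsort]
  · exact hy _ fun h => hj ((Tuple.sort y).injective (h.trans hsort.symm))

lemma not_lexDom_of_eq_off {x y : Fin (n + 1) → ℝ} {i₀ : Fin (n + 1)} {c : ℝ}
    (hy : ∀ j ≠ i₀, y j = c) (hlt : y i₀ < c) (hx : x i₀ ≤ y i₀)
    (hsum : ∑ j, x j ≤ ∑ j, y j) : ¬ LexDom x y := by
  rintro ⟨t, hbefore, hat⟩
  have hsorted := sortVec_eq_of_eq_off hy hlt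
  rcases eq_or_ne t 0 with rfl | ht
  · have := sortVec_zero_le x i₀
    rw [hsorted, if_pos rfl] at hat
    linarith
  · have hlarger : ∑ j, sortVec y j < ∑ j, sortVec x j := by
      refine Finset.sum_lt_sum (fun j _ => ?_) ⟨t, mem_univ t, hat⟩
      rcases lt_or_ge j t with hjt | htj
      · exact (hbefore j hjt).ge
      · have hj : j ≠ 0 := fun h => ht (le_antisymm (h ▸ htj) (Fin.zero_le t))
        calc sortVec y j = sortVec y t := by rw [hsorted, hsorted, if_neg hj, if_neg ht]
          _ ≤ sortVec x t := hat.le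
          _ ≤ sortVec x j := Tuple.monotone_sort x htj
    rw [sum_sortVec, sum_sortVec] at hlarger
    linarith

end Leximin

section CoalitionValue

variable {n m : ℕ} (v : Fin n → Finset (Fin m) → ℝ)

lemma isAlloc_singleton_coalition (i : Fin n) (a : Fin n → Finset (Fin m)) : IsAlloc {i} a := by
  intro j hj j' hj' hne
  rw [mem_singleton] at hj hj'
  exact absurd (hj.trans hj'.symm) hne

lemma isAlloc_of_pairwise_disjoint {S : Finset (Fin n)} {a : Fin n → Finset (Fin m)}
    (ha : Pairwise (Disjoint on a)) : IsAlloc S a :=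
  fun _ _ _ _ hij => ha hij

lemma le_coalW {S : Finset (Fin n)} {a : Fin n → Finset (Fin m)} (ha : IsAlloc S a) :
    ∑ i ∈ S, v i (a i) ≤ coalW v S :=
  le_csSup ((Set.toFinite _).image _).bddAbove ⟨a, ha, rfl⟩

lemma coalW_le {S : Finset (Fin n)} {c : ℝ} (h : ∀ a, IsAlloc S a → ∑ i ∈ S, v i (a i) ≤ c) :
    coalW v S ≤ c :=
  csSup_le ⟨_, fun _ => ∅, fun _ _ _ _ _ => disjoint_empty_left _, rfl⟩
    (by rintro _ ⟨a, ha, rfl⟩; exact h a ha)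

end CoalitionValue

section Core

variable {n : ℕ} {w : Finset (Fin n) → ℝ} {π : Fin n → ℝ}

lemma apply_le_of_mem_corePoly (hπ : π ∈ CorePoly w) (i : Fin n) :
    π i ≤ w univ - w (univ \ {i}) := by
  simpa using hπ.2 (univ \ {i})

lemma sum_erase_le_of_mem_corePoly (hπ : π ∈ CorePoly w) (i : Fin n) :
    ∑ j ∈ univ.erase i, π j ≤ w univ - w {i} := by
  simpa [sdiff_singleton_eq_erase] using hπ.2 {i}

end Core

noncomputable def tightValuation (k : ℕ) (i : Fin (k + 1)) (B : Finset (Fin (k + 1))) : ℝ :=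
  if i = 0 then (if B = univ then k - 1 else 0) else (if i ∈ B then 1 else 0)

section TightAuction

variable {k : ℕ}

lemma tightValuation_empty (i : Fin (k + 1)) : tightValuation k i ∅ = 0 := by
  simp [tightValuation, (univ_nonempty (α := Fin (k + 1))).ne_empty.symm]

lemma tightValuation_nonneg (hk : 1 ≤ k) (i : Fin (k + 1)) (B : Finset (Fin (k + 1))) :
    0 ≤ tightValuation k i B := by
  have : (1 : ℝ) ≤ k := by exact_mod_cast hk
  unfold tightValuation
  split_ifs <;> linarith

lemma sum_tightValuation_le {S : Finset (Fin (k + 1))} {a : Fin (k + 1) → Finset (Fin (k + 1))}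
    (ha : IsAlloc S a) : ∑ i ∈ S, tightValuation k i (a i) ≤ max ((k : ℝ) - 1) #(S.erase 0) := by
  by_cases h0 : 0 ∈ S ∧ a 0 = univ
  · obtain ⟨h0S, h0a⟩ := h0
    have hrest : ∀ j ∈ S.erase 0, tightValuation k j (a j) = 0 := by
      intro j hj
      obtain ⟨hj0, hjS⟩ := mem_erase.1 hj
      have : a j = ∅ := disjoint_top.1 (by simpa [h0a] using ha j hjS 0 h0S hj0)
      rw [this, tightValuation_empty]
    rw [← add_sum_erase S _ h0S, sum_eq_zero hrest]
    simp [tightValuation, h0a]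
  · refine le_max_of_le_right ?_
    calc ∑ i ∈ S, tightValuation k i (a i) ≤ ∑ i ∈ S, if i ≠ 0 then 1 else 0 := by
          refine sum_le_sum fun i hi => ?_
          unfold tightValuation
          split_ifs <;> simp_all
      _ = #(S.erase 0) := by rw [sum_boole, filter_ne']

lemma sum_tightValuation_singleton (hk : 1 ≤ k) (S : Finset (Fin (k + 1))) :
    ∑ i ∈ S, tightValuation k i {i} = #(S.erase 0) := by
  have h0 : ({0} : Finset (Fin (k + 1))) ≠ univ := by
    intro h
    have := congrArg card h
    simp at this
    omega
  rw [← filter_ne', ← sum_boole]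
  refine sum_congr rfl fun i _ => ?_
  by_cases hi : i = 0 <;> simp [tightValuation, hi, h0]

lemma coalW_tightValuation_le (S : Finset (Fin (k + 1))) :
    coalW (tightValuation k) S ≤ max ((k : ℝ) - 1) #(S.erase 0) :=
  coalW_le _ fun _ => sum_tightValuation_le

lemma card_erase_zero_le_sub_one {S : Finset (Fin (k + 1))} {j : Fin (k + 1)} (hj0 : j ≠ 0)
    (hjS : j ∉ S) : (#(S.erase 0) : ℝ) ≤ k - 1 := by
  have hlt : #(S.erase 0) < #(univ.erase (0 : Fin (k + 1))) :=
    card_lt_card ⟨erase_subset_erase 0 (subset_univ S),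
      fun h => hjS (mem_of_mem_erase (h (mem_erase.2 ⟨hj0, mem_univ j⟩)))⟩
  rw [card_erase_of_mem (mem_univ 0), card_univ, Fintype.card_fin, Nat.add_sub_cancel] at hlt
  have : ((#(S.erase 0) + 1 : ℕ) : ℝ) ≤ k := by exact_mod_cast hlt
  push_cast at this
  linarith

lemma card_erase_zero_le (S : Finset (Fin (k + 1))) : (#(S.erase 0) : ℝ) ≤ k := by
  have := card_le_card (erase_subset_erase 0 (subset_univ S))
  rw [card_erase_of_mem (mem_univ 0), card_univ, Fintype.card_fin, Nat.add_sub_cancel] at this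
  exact_mod_cast this

lemma coalW_tightValuation_le_sub_one {S : Finset (Fin (k + 1))} {j : Fin (k + 1)}
    (hj0 : j ≠ 0) (hjS : j ∉ S) : coalW (tightValuation k) S ≤ k - 1 :=
  (coalW_tightValuation_le S).trans (max_le le_rfl (card_erase_zero_le_sub_one hj0 hjS))

lemma coalW_tightValuation_le_k (S : Finset (Fin (k + 1))) : coalW (tightValuation k) S ≤ k :=
  (coalW_tightValuation_le S).trans (max_le (by linarith) (card_erase_zero_le S))

lemma card_erase_zero_le_coalW (hk : 1 ≤ k) (S : Finset (Fin (k + 1))) :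
    (#(S.erase 0) : ℝ) ≤ coalW (tightValuation k) S :=
  sum_tightValuation_singleton hk S ▸
    le_coalW _ (isAlloc_of_pairwise_disjoint fun _ _ h => disjoint_singleton.2 h)

lemma coalW_tightValuation_univ (hk : 1 ≤ k) : coalW (tightValuation k) univ = k := by
  refine le_antisymm (coalW_tightValuation_le_k univ) ?_
  simpa [card_erase_of_mem] using card_erase_zero_le_coalW hk univ

lemma le_coalW_tightValuation_compl_zero (hk : 1 ≤ k) :
    (k : ℝ) ≤ coalW (tightValuation k) (univ \ {0}) := by
  simpa [sdiff_singleton_eq_erase, card_erase_of_mem] using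
    card_erase_zero_le_coalW hk (univ \ {0})

lemma sub_one_le_coalW_tightValuation_zero : (k : ℝ) - 1 ≤ coalW (tightValuation k) {0} := by
  simpa [tightValuation] using
    le_coalW (tightValuation k) (isAlloc_singleton_coalition 0 fun _ => univ)

lemma mem_corePoly_tightValuation (hk : 1 ≤ k) {π : Fin (k + 1) → ℝ} :
    π ∈ CorePoly (coalW (tightValuation k)) ↔ (∀ i, 0 ≤ π i) ∧ π 0 = 0 ∧ ∑ i, π i ≤ 1 := by
  constructor
  · intro hπ
    have hzero := apply_le_of_mem_corePoly hπ 0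
    have hrest := sum_erase_le_of_mem_corePoly hπ 0
    rw [coalW_tightValuation_univ hk] at hzero hrest
    have := le_coalW_tightValuation_compl_zero hk
    have := sub_one_le_coalW_tightValuation_zero (k := k)
    have hπ0 : π 0 = 0 := le_antisymm (by linarith) (hπ.1 0)
    refine ⟨hπ.1, hπ0, ?_⟩
    rw [← add_sum_erase univ π (mem_univ 0), hπ0]
    linarith
  · rintro ⟨hnonneg, hπ0, hsum⟩
    refine ⟨hnonneg, fun S => ?_⟩
    rw [coalW_tightValuation_univ hk]
    by_cases hS : ∃ j ≠ 0, j ∉ S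
    · obtain ⟨j, hj0, hjS⟩ := hS
      have := coalW_tightValuation_le_sub_one hj0 hjS
      have : ∑ i ∈ univ \ S, π i ≤ ∑ i, π i :=
        sum_le_sum_of_subset_of_nonneg (subset_univ _) fun i _ _ => hnonneg i
      linarith
    · push Not at hS
      have hsub : univ \ S ⊆ {0} := fun i hi =>
        mem_singleton.2 (by_contra fun h => (mem_sdiff.1 hi).2 (hS i h))
      have : ∑ i ∈ univ \ S, π i ≤ ∑ i ∈ {0}, π i :=
        sum_le_sum_of_subset_of_nonneg hsub fun i _ _ => hnonneg i
      rw [sum_singleton, hπ0] at this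
      linarith [coalW_tightValuation_le_k S]

lemma winners_tightValuation (hk : 1 ≤ k) : winners (tightValuation k) = univ.erase 0 := by
  ext i
  simp only [winners, mem_filter, mem_erase, mem_univ, true_and, and_true,
    coalW_tightValuation_univ hk]
  constructor
  · rintro h rfl
    linarith [le_coalW_tightValuation_compl_zero hk]
  · intro hi
    linarith [coalW_tightValuation_le_sub_one (S := univ \ {i}) hi (by simp)]

lemma isGreatest_corePoly_tightValuation_one (hk : 1 ≤ k) :
    IsGreatest ((fun π : Fin (k + 1) → ℝ => π 1) '' CorePoly (coalW (tightValuation k))) 1 := by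
  have h10 : (1 : Fin (k + 1)) ≠ 0 := Fin.one_eq_zero_iff.not.2 (by omega)
  refine ⟨⟨Pi.single 1 1, (mem_corePoly_tightValuation hk).2 ⟨?_, ?_, ?_⟩, Pi.single_eq_same 1 1⟩, ?_⟩
  · intro i
    by_cases hi : i = 1 <;> simp [hi]
  · exact Pi.single_eq_of_ne h10.symm 1
  · simp [sum_pi_single']
  · rintro _ ⟨π, hπ, rfl⟩
    obtain ⟨hnonneg, -, hsum⟩ := (mem_corePoly_tightValuation hk).1 hπ
    exact (single_le_sum (fun i _ => hnonneg i) (mem_univ 1)).trans hsum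

noncomputable def bloPoint (k : ℕ) (i : Fin (k + 1)) : ℝ := if i = 0 then 0 else (k : ℝ)⁻¹

lemma sum_bloPoint (hk : 1 ≤ k) : ∑ i, bloPoint k i = 1 := by
  have : (k : ℝ) ≠ 0 := by positivity
  simp [Fin.sum_univ_succ, bloPoint, Fin.succ_ne_zero, this]

lemma bloPoint_mem_corePoly (hk : 1 ≤ k) : bloPoint k ∈ CorePoly (coalW (tightValuation k)) := by
  refine (mem_corePoly_tightValuation hk).2 ⟨fun i => ?_, if_pos rfl, (sum_bloPoint hk).le⟩
  unfold bloPoint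
  split_ifs <;> positivity

lemma not_lexDom_bloPoint (hk : 1 ≤ k) {π : Fin (k + 1) → ℝ}
    (hπ : π ∈ CorePoly (coalW (tightValuation k))) : ¬ LexDom π (bloPoint k) := by
  obtain ⟨-, hπ0, hsum⟩ := (mem_corePoly_tightValuation hk).1 hπ
  refine not_lexDom_of_eq_off (i₀ := 0) (c := (k : ℝ)⁻¹) (fun j hj => if_neg hj) ?_ ?_ ?_
  · simp only [bloPoint]
    positivity
  · simp [bloPoint, hπ0]
  · rwa [sum_bloPoint hk]

end TightAuction

/-- Tightness of the bound: the BLO utility can be exactly a 1/|W| fraction of the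
maximum core utility. -/
theorem blo_single_utility_bound_tight (k : ℕ) (hk : 2 ≤ k) :
    ∃ (n m : ℕ) (v : Fin n → Finset (Fin m) → ℝ),
      (∀ i, v i ∅ = 0) ∧ (∀ i S, 0 ≤ v i S) ∧ (winners v).card = k ∧
      ∃ i ∈ winners v,
        0 < sSup (Set.image (fun π : Fin n → ℝ => π i) (CorePoly (coalW v))) ∧
        ∃ πB : Fin n → ℝ,
          (πB ∈ CorePoly (coalW v) ∧ ∀ π' ∈ CorePoly (coalW v), ¬ LexDom π' πB) ∧
          πB i = sSup (Set.image (fun π : Fin n → ℝ => π i) (CorePoly (coalW v))) / k := by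
  have hk1 : 1 ≤ k := by omega
  have h10 : (1 : Fin (k + 1)) ≠ 0 := Fin.one_eq_zero_iff.not.2 (by omega)
  have hmax := (isGreatest_corePoly_tightValuation_one hk1).csSup_eq
  have hwin := winners_tightValuation hk1
  refine ⟨k + 1, k + 1, tightValuation k, tightValuation_empty, tightValuation_nonneg hk1, ?_,
    1, ?_, ?_, bloPoint k, ⟨bloPoint_mem_corePoly hk1, fun _ => not_lexDom_bloPoint hk1⟩, ?_⟩
  · simp [hwin, card_erase_of_mem]
  · simpa [hwin] using h10
  · rw [hmax]
    exact one_pos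
  · rw [hmax, bloPoint, if_neg h10, one_div]
end

section
/- Consider a combinatorial auction whose winner set W has size |W| ≥ 2, and let π be any Pareto-optimal element of its core U (no π' ∈ U satisfies π'_i ≥ π_i for all i with strict inequality for some i). Then ∑_{i∈N} π_i ≥ (1/(|W|−1)) · max_{π'∈U} ∑_{i∈N} π'_i. -/
/-!
Non-winners receive nothing at any core point. At a Pareto-optimal core point `π` every bidder
`j` lies outside some coalition `T j` whose core constraint is tight, so every core point `π'`
satisfies `∑_{N ∖ T j} π' ≤ w N - w (T j) = ∑_{N ∖ T j} π`. If some winner `k ≠ j` also lies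
outside `T j` for a winner `j`, the `|W| - 1` sets `N ∖ T l`, `l ∈ W ∖ {k}`, cover `W`, whence
`∑ π' ≤ (|W| - 1) ∑ π`; otherwise `N ∖ T j` meets `W` only in `j`, and `π' ≤ π` on `W`.
-/

open Finset

theorem Finset.sum_biUnion_le_sum_of_nonneg {ι α β : Type*} [DecidableEq α]
    [AddCommMonoid β] [PartialOrder β] [IsOrderedAddMonoid β] {f : α → β} (hf : ∀ a, 0 ≤ f a)
    (s : Finset ι) (t : ι → Finset α) :
    ∑ a ∈ s.biUnion t, f a ≤ ∑ i ∈ s, ∑ a ∈ t i, f a := by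
  rw [← sup_eq_biUnion]
  refine s.apply_sup_le_sum (f := fun u => ∑ a ∈ u, f a) sum_empty fun {u u'} => ?_
  rw [← sum_union_inter (s₁ := u) (s₂ := u')]
  exact le_add_of_nonneg_right (sum_nonneg fun a _ => hf a)

section Cover

variable {ι : Type*} [Fintype ι] {W : Finset ι} {x y : ι → ℝ} {U : ι → Finset ι}

lemma sum_le_card_sub_one_mul_sum_of_overlap [DecidableEq ι]
    (hx : ∀ i, 0 ≤ x i) (hy : ∀ i, 0 ≤ y i)
    (hxW : ∀ i ∉ W, x i = 0) (hU : ∀ j ∈ W, j ∈ U j)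
    (hxy : ∀ j ∈ W, ∑ i ∈ U j, x i ≤ ∑ i ∈ U j, y i)
    {j k : ι} (hj : j ∈ W) (hk : k ∈ W) (hkj : k ≠ j) (hkU : k ∈ U j) :
    ∑ i, x i ≤ (#W - 1 : ℝ) * ∑ i, y i := by
  have hcover : W ⊆ (W.erase k).biUnion U := by
    intro i hi
    rw [mem_biUnion]
    by_cases hik : i = k
    · exact ⟨j, mem_erase.mpr ⟨hkj.symm, hj⟩, hik ▸ hkU⟩
    · exact ⟨i, mem_erase.mpr ⟨hik, hi⟩, hU i hi⟩
  calc ∑ i, x i = ∑ i ∈ W, x i := (sum_subset (subset_univ W) fun i _ hi => hxW i hi).symm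
    _ ≤ ∑ i ∈ (W.erase k).biUnion U, x i :=
        sum_le_sum_of_subset_of_nonneg hcover fun i _ _ => hx i
    _ ≤ ∑ l ∈ W.erase k, ∑ i ∈ U l, x i := sum_biUnion_le_sum_of_nonneg hx _ _
    _ ≤ ∑ l ∈ W.erase k, ∑ i ∈ U l, y i :=
        sum_le_sum fun l hl => hxy l (mem_of_mem_erase hl)
    _ ≤ ∑ _l ∈ W.erase k, ∑ i, y i :=
        sum_le_sum fun l _ => sum_le_sum_of_subset_of_nonneg (subset_univ _) fun i _ _ => hy i
    _ = (#W - 1 : ℝ) * ∑ i, y i := by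
        rw [sum_const, card_erase_of_mem hk, nsmul_eq_mul,
          Nat.cast_sub (card_pos.mpr ⟨k, hk⟩)]
        simp

lemma sum_le_sum_of_separated (hx : ∀ i, 0 ≤ x i) (hxW : ∀ i ∉ W, x i = 0)
    (hyW : ∀ i ∉ W, y i = 0) (hU : ∀ j ∈ W, j ∈ U j)
    (hxy : ∀ j ∈ W, ∑ i ∈ U j, x i ≤ ∑ i ∈ U j, y i)
    (hsep : ∀ j ∈ W, ∀ k ∈ U j, k ∈ W → k = j) :
    ∑ i, x i ≤ ∑ i, y i := by
  have hxy_single : ∀ j ∈ W, x j ≤ y j := fun j hj => calc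
    x j ≤ ∑ i ∈ U j, x i := single_le_sum (fun i _ => hx i) (hU j hj)
    _ ≤ ∑ i ∈ U j, y i := hxy j hj
    _ = y j := sum_eq_single_of_mem j (hU j hj) fun k hk hkj =>
        hyW k fun hkW => hkj (hsep j hj k hk hkW)
  rw [← sum_subset (subset_univ W) fun i _ hi => hxW i hi,
    ← sum_subset (subset_univ W) fun i _ hi => hyW i hi]
  exact sum_le_sum hxy_single

lemma sum_le_card_sub_one_mul_sum_of_cover [DecidableEq ι] (hW : 2 ≤ #W)
    (hx : ∀ i, 0 ≤ x i) (hy : ∀ i, 0 ≤ y i)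
    (hxW : ∀ i ∉ W, x i = 0) (hyW : ∀ i ∉ W, y i = 0) (hU : ∀ j ∈ W, j ∈ U j)
    (hxy : ∀ j ∈ W, ∑ i ∈ U j, x i ≤ ∑ i ∈ U j, y i) :
    ∑ i, x i ≤ (#W - 1 : ℝ) * ∑ i, y i := by
  by_cases hsep : ∀ j ∈ W, ∀ k ∈ U j, k ∈ W → k = j
  · have hW' : (1 : ℝ) ≤ #W - 1 := by
      have : (2 : ℝ) ≤ #W := by exact_mod_cast hW
      linarith
    calc ∑ i, x i ≤ ∑ i, y i := sum_le_sum_of_separated hx hxW hyW hU hxy hsep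
      _ ≤ (#W - 1 : ℝ) * ∑ i, y i := le_mul_of_one_le_left (sum_nonneg fun i _ => hy i) hW'
  · push Not at hsep
    obtain ⟨j, hj, k, hkU, hk, hkj⟩ := hsep
    exact sum_le_card_sub_one_mul_sum_of_overlap hx hy hxW hU hxy hj hk hkj hkU

end Cover

section Core

variable {n : ℕ} {w : Finset (Fin n) → ℝ} {π : Fin n → ℝ}

lemma apply_eq_zero_of_mem_corePoly (hπ : π ∈ CorePoly w) {i : Fin n}
    (hi : w univ ≤ w (univ \ {i})) : π i = 0 := by
  have h := hπ.2 (univ \ {i})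
  rw [Finset.sdiff_sdiff_eq_self (subset_univ _), sum_singleton] at h
  exact le_antisymm (by linarith) (hπ.1 i)

lemma add_single_mem_corePoly (hπ : π ∈ CorePoly w) (j : Fin n) {ε : ℝ} (hε : 0 ≤ ε)
    (hslack : ∀ S, j ∉ S → ∑ i ∈ univ \ S, π i + ε ≤ w univ - w S) :
    π + Pi.single j ε ∈ CorePoly w := by
  refine ⟨fun i => add_nonneg (hπ.1 i) ?_, fun S => ?_⟩
  · by_cases hij : i = j
    · subst hij; simpa using hε
    · simp [hij]
  · simp only [Pi.add_apply, sum_add_distrib, sum_pi_single', mem_sdiff, mem_univ, true_and]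
    by_cases hjS : j ∈ S
    · simpa [hjS] using hπ.2 S
    · simpa [hjS] using hslack S hjS

/-- Otherwise the payoff of `j` could be raised by the least slack among the constraints
avoiding `j`. -/
lemma exists_tight_of_pareto (hπ : π ∈ CorePoly w)
    (hPO : ¬ ∃ π' ∈ CorePoly w, (∀ i, π i ≤ π' i) ∧ ∃ j, π j < π' j) (j : Fin n) :
    ∃ S, j ∉ S ∧ ∑ i ∈ univ \ S, π i = w univ - w S := by
  by_contra! hslack
  let slack S := w univ - w S - ∑ i ∈ univ \ S, π i
  obtain ⟨S₀, hS₀, hmin⟩ := ({S | j ∉ S} : Finset (Finset (Fin n))).exists_min_image slack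
    ⟨∅, by simp⟩
  have hS₀j : j ∉ S₀ := (mem_filter.mp hS₀).2
  have hpos : 0 < slack S₀ :=
    sub_pos.mpr ((hπ.2 S₀).lt_of_ne (hslack S₀ hS₀j))
  refine hPO ⟨π + Pi.single j (slack S₀), ?_, fun i => ?_, j, by simpa using hpos⟩
  · refine add_single_mem_corePoly hπ j hpos.le fun S hjS => ?_
    have := hmin S (by simpa using hjS)
    simp only [slack] at this
    linarith
  · by_cases hij : i = j
    · subst hij; simpa using hpos.le
    · simp [hij]

end Core

section Auction

variable {n m : ℕ} {v : Fin n → Finset (Fin m) → ℝ}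

lemma coalW_univ_le_of_notMem_winners {i : Fin n} (hi : i ∉ winners v) :
    coalW v univ ≤ coalW v (univ \ {i}) := by
  simpa [winners] using hi

lemma sum_le_card_winners_sub_one_mul_sum (hW : 2 ≤ #(winners v)) {π π' : Fin n → ℝ}
    (hπ : π ∈ CorePoly (coalW v))
    (hPO : ¬ ∃ π' ∈ CorePoly (coalW v), (∀ i, π i ≤ π' i) ∧ ∃ j, π j < π' j)
    (hπ' : π' ∈ CorePoly (coalW v)) :
    ∑ i, π' i ≤ (#(winners v) - 1 : ℝ) * ∑ i, π i := by
  choose T hjT htight using exists_tight_of_pareto hπ hPO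
  refine sum_le_card_sub_one_mul_sum_of_cover (U := fun j => univ \ T j) hW hπ'.1 hπ.1
    (fun i hi => apply_eq_zero_of_mem_corePoly hπ' (coalW_univ_le_of_notMem_winners hi))
    (fun i hi => apply_eq_zero_of_mem_corePoly hπ (coalW_univ_le_of_notMem_winners hi))
    (fun j _ => by simpa using hjT j) fun j _ => ?_
  rw [htight j]
  exact hπ'.2 (T j)

end Auction

theorem pareto_total_utility_bound_general (n m : ℕ) (v : Fin n → Finset (Fin m) → ℝ)
    (hW : 2 ≤ (winners v).card)
    (π : Fin n → ℝ) (hmem : π ∈ CorePoly (coalW v))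
    (hPO : ¬ ∃ π' ∈ CorePoly (coalW v), (∀ i, π i ≤ π' i) ∧ ∃ j, π j < π' j) :
    (1 / (((winners v).card : ℝ) - 1)) *
        sSup (Set.image (fun π' : Fin n → ℝ => ∑ i, π' i) (CorePoly (coalW v))) ≤ ∑ i, π i := by
  have hpos : (0 : ℝ) < (winners v).card - 1 := by
    have : (2 : ℝ) ≤ (winners v).card := by exact_mod_cast hW
    linarith
  rw [one_div_mul_eq_div, div_le_iff₀ hpos, mul_comm]
  refine csSup_le ⟨_, π, hmem, rfl⟩ ?_
  rintro _ ⟨π', hπ', rfl⟩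
  exact sum_le_card_winners_sub_one_mul_sum hW hmem hPO hπ'

/-- Any Pareto-optimal core outcome attains at least a 1/(|W|-1) fraction of the maximum
total utility over the core. -/
theorem pareto_total_utility_bound (n m : ℕ) (v : Fin n → Finset (Fin m) → ℝ)
    (hv0 : ∀ i, v i ∅ = 0) (hvnn : ∀ i S, 0 ≤ v i S)
    (hW : 2 ≤ (winners v).card)
    (π : Fin n → ℝ) (hmem : π ∈ CorePoly (coalW v))
    (hPO : ¬ ∃ π' ∈ CorePoly (coalW v), (∀ i, π i ≤ π' i) ∧ ∃ j, π j < π' j) :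
    (1 / (((winners v).card : ℝ) - 1)) *
        sSup (Set.image (fun π' : Fin n → ℝ => ∑ i, π' i) (CorePoly (coalW v))) ≤ ∑ i, π i :=
  pareto_total_utility_bound_general n m v hW π hmem hPO
end

section
/- The relative ratio 1/(|W|−1) for Pareto-optimal core outcomes is tight: for every integer k ≥ 2 there exists a combinatorial auction with winner set W of size k and a Pareto-optimal element π of its core U such that ∑_{i∈N} π_i = (1/(k−1)) · max_{π'∈U} ∑_{i∈N} π'_i and max_{π'∈U} ∑_{i∈N} π'_i > 0. -/
open Finset

section CoalitionValue

variable {n m : ℕ}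

lemma isAlloc_const_empty (S : Finset (Fin n)) : IsAlloc S (fun _ => (∅ : Finset (Fin m))) :=
  fun _ _ _ _ _ => disjoint_bot_left

lemma bddAbove_allocValues (v : Fin n → Finset (Fin m) → ℝ) (S : Finset (Fin n)) :
    BddAbove ((fun a : Fin n → Finset (Fin m) => ∑ i ∈ S, v i (a i)) '' {a | IsAlloc S a}) :=
  (Set.toFinite _).bddAbove

lemma sum_le_coalW (v : Fin n → Finset (Fin m) → ℝ) {S : Finset (Fin n)}
    {a : Fin n → Finset (Fin m)} (ha : IsAlloc S a) : ∑ i ∈ S, v i (a i) ≤ coalW v S :=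
  le_csSup (bddAbove_allocValues v S) ⟨a, ha, rfl⟩

lemma coalW_le_of_forall_isAlloc (v : Fin n → Finset (Fin m) → ℝ) {S : Finset (Fin n)} {c : ℝ}
    (h : ∀ a, IsAlloc S a → ∑ i ∈ S, v i (a i) ≤ c) : coalW v S ≤ c :=
  csSup_le ⟨_, _, isAlloc_const_empty S, rfl⟩ (by rintro _ ⟨a, ha, rfl⟩; exact h a ha)

lemma sum_le_of_mem_corePoly {w : Finset (Fin n) → ℝ} {π : Fin n → ℝ} (hπ : π ∈ CorePoly w)
    (T : Finset (Fin n)) : ∑ i ∈ T, π i ≤ w univ - w (univ \ T) := by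
  simpa [Finset.sdiff_sdiff_eq_self (subset_univ T)] using hπ.2 (univ \ T)

end CoalitionValue

section SingleMinded

variable {n m : ℕ} (R : Fin n → Finset (Fin m))

def singleMindedValuation (i : Fin n) (S : Finset (Fin m)) : ℝ := if R i ⊆ S then 1 else 0

variable {R}

lemma singleMindedValuation_empty {i : Fin n} (h : (R i).Nonempty) :
    singleMindedValuation R i ∅ = 0 :=
  if_neg fun h' => h.ne_empty (subset_empty.mp h')

lemma singleMindedValuation_nonneg (i : Fin n) (S : Finset (Fin m)) :
    0 ≤ singleMindedValuation R i S := by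
  unfold singleMindedValuation; split_ifs <;> norm_num

lemma card_le_coalW_singleMinded {S T : Finset (Fin n)} (hTS : T ⊆ S)
    (hT : (T : Set (Fin n)).PairwiseDisjoint R) :
    (#T : ℝ) ≤ coalW (singleMindedValuation R) S := by
  classical
  let a : Fin n → Finset (Fin m) := fun i => if i ∈ T then R i else ∅
  have ha : IsAlloc S a := fun i _ j _ hij => by
    by_cases hi : i ∈ T
    · by_cases hj : j ∈ T
      · simpa [a, hi, hj] using hT hi hj hij
      · simp [a, hj]
    · simp [a, hi]
  calc (#T : ℝ) = ∑ i ∈ T, singleMindedValuation R i (a i) := by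
        simp +contextual [a, singleMindedValuation]
    _ ≤ ∑ i ∈ S, singleMindedValuation R i (a i) :=
        sum_le_sum_of_subset_of_nonneg hTS fun i _ _ => singleMindedValuation_nonneg i _
    _ ≤ _ := sum_le_coalW _ ha

lemma coalW_singleMinded_le {S : Finset (Fin n)} {c : ℝ}
    (h : ∀ T ⊆ S, (T : Set (Fin n)).PairwiseDisjoint R → (#T : ℝ) ≤ c) :
    coalW (singleMindedValuation R) S ≤ c := by
  classical
  refine coalW_le_of_forall_isAlloc _ fun a ha => ?_
  have hsat : ((S.filter fun i => R i ⊆ a i) : Set (Fin n)).PairwiseDisjoint R :=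
    fun i hi j hj hij => by
      simp only [coe_filter, Set.mem_ofPred_eq] at hi hj
      exact (ha i hi.1 j hj.1 hij).mono hi.2 hj.2
  calc ∑ i ∈ S, singleMindedValuation R i (a i) = #(S.filter fun i => R i ⊆ a i) :=
        sum_boole _ _
    _ ≤ c := h _ (filter_subset _ _) hsat

end SingleMinded

namespace ParetoTightExample

variable {l : ℕ}

/-- Bidder `i ≤ l` wants item `i`; bidder `l + j` with `1 ≤ j ≤ l` wants items `0` and `j`. -/
def bundle (l : ℕ) (i : Fin (2 * l + 1)) : Finset (Fin (l + 1)) :=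
  {x | (x : ℕ) = i ∨ l < i ∧ ((x : ℕ) = 0 ∨ (x : ℕ) + l = i)}

abbrev auction (l : ℕ) : Fin (2 * l + 1) → Finset (Fin (l + 1)) → ℝ :=
  singleMindedValuation (bundle l)

def lastWinner (l : ℕ) : Fin (2 * l + 1) := ⟨l, by omega⟩

def regulars (l : ℕ) : Finset (Fin (2 * l + 1)) := Ioc 0 (lastWinner l)

lemma mem_bundle {i : Fin (2 * l + 1)} {x : Fin (l + 1)} :
    x ∈ bundle l i ↔ (x : ℕ) = i ∨ l < i ∧ ((x : ℕ) = 0 ∨ (x : ℕ) + l = i) := by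
  simp [bundle]

lemma mem_regulars {i : Fin (2 * l + 1)} : i ∈ regulars l ↔ 1 ≤ (i : ℕ) ∧ (i : ℕ) ≤ l := by
  simp [regulars, lastWinner, Fin.lt_def, Fin.le_def, Nat.one_le_iff_ne_zero, Nat.pos_iff_ne_zero]

lemma card_regulars : #(regulars l) = l := by
  simp [regulars, lastWinner]

lemma lastWinner_lt_of_notMem_regulars {i : Fin (2 * l + 1)} (h0 : i ≠ 0)
    (hi : i ∉ regulars l) : lastWinner l < i := by
  rw [mem_regulars] at hi
  rw [Fin.lt_def]
  have : (i : ℕ) ≠ 0 := Fin.val_ne_zero_iff.mpr h0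
  simp only [lastWinner]
  omega

lemma bundle_nonempty (i : Fin (2 * l + 1)) : (bundle l i).Nonempty := by
  by_cases h : (i : ℕ) ≤ l
  · exact ⟨⟨i, by omega⟩, mem_bundle.mpr (Or.inl rfl)⟩
  · exact ⟨0, mem_bundle.mpr (Or.inr ⟨by omega, Or.inl rfl⟩)⟩

lemma zero_mem_bundle {i : Fin (2 * l + 1)} (hi : i ∉ regulars l) : 0 ∈ bundle l i := by
  rw [mem_regulars] at hi
  rw [mem_bundle, Fin.val_zero]
  omega

lemma card_le_one_add_card_inter_regulars {T : Finset (Fin (2 * l + 1))}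
    (hT : (T : Set (Fin (2 * l + 1))).PairwiseDisjoint (bundle l)) :
    #T ≤ 1 + #(T ∩ regulars l) := by
  have hout : #(T \ regulars l) ≤ 1 := card_le_one.mpr fun i hi j hj => by
    by_contra hij
    rw [mem_sdiff] at hi hj
    exact disjoint_left.mp (hT hi.1 hj.1 hij) (zero_mem_bundle hi.2) (zero_mem_bundle hj.2)
  have := card_sdiff_add_card_inter T (regulars l)
  omega

lemma card_le_of_zero_notMem {T : Finset (Fin (2 * l + 1))}
    (hT : (T : Set (Fin (2 * l + 1))).PairwiseDisjoint (bundle l)) (h0 : 0 ∉ T) : #T ≤ l := by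
  have hne : ∀ i ∈ T, ((bundle l i).erase 0).Nonempty := fun i hi => by
    have : (i : ℕ) ≠ 0 := Fin.val_ne_zero_iff.mpr (ne_of_mem_of_not_mem hi h0)
    refine ⟨⟨if (i : ℕ) ≤ l then i else i - l, by split_ifs <;> omega⟩, ?_⟩
    simp only [mem_erase, mem_bundle, ne_eq, Fin.ext_iff, Fin.val_zero]
    split_ifs <;> omega
  calc #T ≤ #(T.biUnion fun i => (bundle l i).erase 0) :=
        card_le_card_biUnion (hT.mono fun i => erase_subset _ _) hne
    _ ≤ #((univ : Finset (Fin (l + 1))).erase 0) :=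
        card_le_card (biUnion_subset.mpr fun i _ => erase_subset_erase _ (subset_univ _))
    _ = l := by simp

lemma pairwiseDisjoint_bundle_Iic :
    ((Iic (lastWinner l) : Finset _) : Set (Fin (2 * l + 1))).PairwiseDisjoint (bundle l) :=
  fun i hi j hj hij => disjoint_left.mpr fun x hxi hxj => by
    simp only [coe_Iic, Set.mem_Iic, Fin.le_def, lastWinner] at hi hj
    rw [mem_bundle] at hxi hxj
    exact hij (Fin.ext (by omega))

lemma pairwiseDisjoint_bundle_swap {p q : Fin (2 * l + 1)} (hq : q ∈ regulars l)
    (hp : (p : ℕ) = l + q) :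
    ((insert p ((regulars l).erase q) : Finset _) : Set (Fin (2 * l + 1))).PairwiseDisjoint
      (bundle l) :=
  fun i hi j hj hij => disjoint_left.mpr fun x hxi hxj => by
    rw [mem_regulars] at hq
    simp only [coe_insert, coe_erase, Set.mem_insert_iff, Set.mem_sdiff, Set.mem_singleton_iff,
      mem_coe, mem_regulars, Fin.ext_iff] at hi hj
    rw [mem_bundle] at hxi hxj
    exact hij (Fin.ext (by omega))

lemma coalW_le_one_add (S : Finset (Fin (2 * l + 1))) :
    coalW (auction l) S ≤ 1 + #(S ∩ regulars l) :=
  coalW_singleMinded_le fun T hTS hT => by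
    have := card_le_one_add_card_inter_regulars hT
    have := card_le_card (inter_subset_inter_right hTS : T ∩ regulars l ⊆ S ∩ regulars l)
    exact_mod_cast (by omega : #T ≤ 1 + #(S ∩ regulars l))

lemma coalW_le_of_zero_notMem {S : Finset (Fin (2 * l + 1))} (h0 : 0 ∉ S) :
    coalW (auction l) S ≤ l :=
  coalW_singleMinded_le fun _ hTS hT => by
    exact_mod_cast card_le_of_zero_notMem hT fun h => h0 (hTS h)

lemma coalW_le_succ (S : Finset (Fin (2 * l + 1))) : coalW (auction l) S ≤ l + 1 := by
  have : #(S ∩ regulars l) ≤ l := (card_le_card inter_subset_right).trans_eq card_regulars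
  have hcast : (#(S ∩ regulars l) : ℝ) ≤ l := by exact_mod_cast this
  linarith [coalW_le_one_add S]

lemma succ_le_coalW {S : Finset (Fin (2 * l + 1))} (hS : Iic (lastWinner l) ⊆ S) :
    (l : ℝ) + 1 ≤ coalW (auction l) S := by
  simpa [lastWinner] using card_le_coalW_singleMinded hS pairwiseDisjoint_bundle_Iic

lemma coalW_univ : coalW (auction l) univ = l + 1 :=
  (coalW_le_succ _).antisymm (succ_le_coalW (subset_univ _))

lemma le_coalW_sdiff_pair {q : Fin (2 * l + 1)} (hq : q ∈ regulars l) :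
    (l : ℝ) ≤ coalW (auction l) (univ \ {0, q}) := by
  have hq' := mem_regulars.mp hq
  obtain ⟨p, hp⟩ : ∃ p : Fin (2 * l + 1), (p : ℕ) = l + q := ⟨⟨l + q, by omega⟩, rfl⟩
  have hsub : insert p ((regulars l).erase q) ⊆ univ \ {0, q} := by
    intro i hi
    simp only [mem_insert, mem_erase, mem_regulars, ne_eq, Fin.ext_iff] at hi
    simp only [mem_sdiff, mem_univ, mem_insert, mem_singleton, true_and, Fin.ext_iff,
      Fin.val_zero]
    omega
  have hcard : #(insert p ((regulars l).erase q)) = l := by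
    rw [card_insert_of_notMem (by simp only [mem_erase, mem_regulars, ne_eq, Fin.ext_iff]; omega),
      card_erase_of_mem hq, card_regulars]
    omega
  simpa [hcard] using card_le_coalW_singleMinded hsub (pairwiseDisjoint_bundle_swap hq hp)

lemma winners_auction : winners (auction l) = Iic (lastWinner l) := by
  ext i
  simp only [winners, mem_filter, mem_univ, true_and, coalW_univ, mem_Iic]
  constructor
  · intro hwin
    by_contra hi
    have hsub : Iic (lastWinner l) ⊆ univ \ {i} := fun j hj => by
      simp only [mem_Iic] at hj
      simpa using (hj.trans_lt (not_le.mp hi)).ne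
    linarith [succ_le_coalW hsub]
  · intro hi
    rcases eq_or_ne i 0 with rfl | hi0
    · linarith [coalW_le_of_zero_notMem (l := l) (S := univ \ {0}) (by simp)]
    · have hiR : i ∈ regulars l := by
        rw [mem_regulars]
        have : (i : ℕ) ≠ 0 := Fin.val_ne_zero_iff.mpr hi0
        rw [Fin.le_def] at hi
        exact ⟨by omega, hi⟩
      have hss : (univ \ {i}) ∩ regulars l ⊂ regulars l :=
        ⟨inter_subset_right, fun h => by simpa using h hiR⟩
      have hlt : #((univ \ {i}) ∩ regulars l) < l := (card_lt_card hss).trans_eq card_regulars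
      have hcast : (#((univ \ {i}) ∩ regulars l) : ℝ) + 1 ≤ l := by exact_mod_cast hlt
      linarith [coalW_le_one_add (univ \ {i})]

section Core

variable {π : Fin (2 * l + 1) → ℝ}

lemma eq_zero_of_lastWinner_lt (hπ : π ∈ CorePoly (coalW (auction l))) {b : Fin (2 * l + 1)}
    (hb : lastWinner l < b) : π b = 0 := by
  have hsub : Iic (lastWinner l) ⊆ univ \ {b} := fun j hj => by
    simp only [mem_Iic] at hj
    simpa using (hj.trans_lt hb).ne
  have := sum_le_of_mem_corePoly hπ {b}
  rw [sum_singleton, coalW_univ] at this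
  linarith [succ_le_coalW hsub, hπ.1 b]

lemma apply_zero_add_le_one (hπ : π ∈ CorePoly (coalW (auction l))) {q : Fin (2 * l + 1)}
    (hq : q ∈ regulars l) : π 0 + π q ≤ 1 := by
  have h0q : (0 : Fin (2 * l + 1)) ≠ q := fun h => by simp [← h, mem_regulars] at hq
  have := sum_le_of_mem_corePoly hπ {0, q}
  rw [sum_pair h0q, coalW_univ] at this
  linarith [le_coalW_sdiff_pair hq]

lemma sum_eq_apply_zero_add_sum_regulars (hπ : π ∈ CorePoly (coalW (auction l))) :
    ∑ i, π i = π 0 + ∑ i ∈ regulars l, π i := by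
  rw [← sum_insert (by simp [mem_regulars])]
  refine (sum_subset (subset_univ _) fun i _ hi => ?_).symm
  rw [mem_insert, not_or] at hi
  exact eq_zero_of_lastWinner_lt hπ (lastWinner_lt_of_notMem_regulars hi.1 hi.2)

lemma sum_le_of_mem_core (hπ : π ∈ CorePoly (coalW (auction l))) (hl : 1 ≤ l) :
    ∑ i, π i ≤ l := by
  have hpairs : ∑ q ∈ regulars l, (π 0 + π q) ≤ ∑ q ∈ regulars l, (1 : ℝ) :=
    sum_le_sum fun q hq => apply_zero_add_le_one hπ hq
  rw [sum_add_distrib, sum_const, sum_const, card_regulars, nsmul_eq_mul, nsmul_one] at hpairs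
  have : π 0 ≤ l * π 0 := le_mul_of_one_le_left (hπ.1 0) (by exact_mod_cast hl)
  rw [sum_eq_apply_zero_add_sum_regulars hπ]
  linarith

lemma eq_single_of_single_le (hπ : π ∈ CorePoly (coalW (auction l))) (hl : 1 ≤ l)
    (hle : Pi.single 0 1 ≤ π) : π = Pi.single 0 1 := by
  have h0 : 1 ≤ π 0 := by simpa using hle 0
  have hreg : ∀ q ∈ regulars l, π q = 0 := fun q hq =>
    le_antisymm (by linarith [apply_zero_add_le_one hπ hq]) (hπ.1 q)
  have hlast : lastWinner l ∈ regulars l := mem_regulars.mpr ⟨hl, le_rfl⟩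
  funext i
  rcases eq_or_ne i 0 with rfl | hi0
  · rw [Pi.single_eq_same]
    linarith [apply_zero_add_le_one hπ hlast, hreg _ hlast]
  · rw [Pi.single_eq_of_ne hi0]
    by_cases hi : i ∈ regulars l
    · exact hreg i hi
    · exact eq_zero_of_lastWinner_lt hπ (lastWinner_lt_of_notMem_regulars hi0 hi)

end Core

lemma single_mem_core : Pi.single 0 1 ∈ CorePoly (coalW (auction l)) := by
  refine ⟨fun i => by rw [Pi.single_apply]; split_ifs <;> norm_num, fun S => ?_⟩
  rw [sum_pi_single', coalW_univ]
  split_ifs with h0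
  · linarith [coalW_le_of_zero_notMem (mem_sdiff.mp h0).2]
  · linarith [coalW_le_succ S]

lemma regularIndicator_mem_core :
    (fun i => if i ∈ regulars l then (1 : ℝ) else 0) ∈ CorePoly (coalW (auction l)) := by
  refine ⟨fun i => by dsimp only; split_ifs <;> norm_num, fun S => ?_⟩
  rw [sum_boole, filter_mem_eq_inter, coalW_univ]
  have hsplit := card_inter_add_card_sdiff (regulars l) S
  rw [card_regulars] at hsplit
  have hrest : (univ \ S) ∩ regulars l = regulars l \ S := by ext; simp [and_comm]
  have hcast : (#(regulars l ∩ S) : ℝ) + #(regulars l \ S) = l := by exact_mod_cast hsplit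
  rw [hrest, inter_comm] at *
  linarith [coalW_le_one_add S]

lemma isGreatest_sum_core (hl : 1 ≤ l) :
    IsGreatest ((fun π : Fin (2 * l + 1) → ℝ => ∑ i, π i) '' CorePoly (coalW (auction l))) l := by
  refine ⟨⟨_, regularIndicator_mem_core, ?_⟩, ?_⟩
  · simp only [sum_boole, filter_mem_eq_inter, univ_inter, card_regulars]
  · rintro _ ⟨π, hπ, rfl⟩
    exact sum_le_of_mem_core hπ hl

end ParetoTightExample

open ParetoTightExample

/-- Tightness of the 1/(|W|-1) ratio for Pareto-optimal core outcomes. -/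
theorem pareto_total_utility_bound_tight (k : ℕ) (hk : 2 ≤ k) :
    ∃ (n m : ℕ) (v : Fin n → Finset (Fin m) → ℝ),
      (∀ i, v i ∅ = 0) ∧ (∀ i S, 0 ≤ v i S) ∧ (winners v).card = k ∧
      ∃ π : Fin n → ℝ,
        π ∈ CorePoly (coalW v) ∧
        (¬ ∃ π' ∈ CorePoly (coalW v), (∀ i, π i ≤ π' i) ∧ ∃ j, π j < π' j) ∧
        (∑ i, π i) = (1 / ((k : ℝ) - 1)) *
          sSup (Set.image (fun π' : Fin n → ℝ => ∑ i, π' i) (CorePoly (coalW v))) ∧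
        0 < sSup (Set.image (fun π' : Fin n → ℝ => ∑ i, π' i) (CorePoly (coalW v))) := by
  obtain ⟨l, rfl⟩ : ∃ l, k = l + 1 := ⟨k - 1, by omega⟩
  have hl : 1 ≤ l := by omega
  have hmax := (isGreatest_sum_core hl).csSup_eq
  refine ⟨2 * l + 1, l + 1, auction l, fun i => singleMindedValuation_empty (bundle_nonempty i),
    singleMindedValuation_nonneg, by rw [winners_auction, Fin.card_Iic]; rfl,
    Pi.single 0 1, single_mem_core, ?_, ?_, ?_⟩
  · rintro ⟨π', hπ', hle, j, hj⟩
    exact hj.ne (by rw [eq_single_of_single_le hπ' hl hle])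
  · have : (l : ℝ) ≠ 0 := by positivity
    rw [hmax, sum_pi_single', if_pos (mem_univ _)]
    push_cast
    rw [add_sub_cancel_right, one_div_mul_cancel this]
  · rw [hmax]
    exact_mod_cast hl
end

section
/- Let N be a finite set, w : Finset N → ℝ with w(∅) = 0, let π be an element of the core polytope U(w), and let W_a ⊆ N be nonempty. For a vector π and Δ ∈ ℝ, write π + Δ·1_{W_a} for the vector that adds Δ to π_i for i ∈ W_a and leaves other coordinates unchanged. Then sup{Δ ≥ 0 : π + Δ·1_{W_a} ∈ U(w)} = min over all S ⊆ N with W_a ⊄ S of (w(N) − w(S) − ∑_{i ∈ N∖S} π_i) / |W_a ∖ S|, and this supremum is attained. -/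
open Finset

theorem Finset.sum_add_ite_mem {ι M : Type*} [DecidableEq ι] [AddCommMonoid M]
    (s t : Finset ι) (f : ι → M) (c : M) :
    ∑ i ∈ s, (f i + if i ∈ t then c else 0) = ∑ i ∈ s, f i + #(s ∩ t) • c := by
  rw [sum_add_distrib, sum_ite_mem, sum_const]

section CorePoly

variable {n : ℕ} {w : Finset (Fin n) → ℝ} {π : Fin n → ℝ} {Wa : Finset (Fin n)}

theorem sum_compl_add_ite_mem (S : Finset (Fin n)) (Δ : ℝ) :
    ∑ i ∈ univ \ S, (π i + if i ∈ Wa then Δ else 0) = ∑ i ∈ univ \ S, π i + #(Wa \ S) * Δ := by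
  rw [sum_add_ite_mem, nsmul_eq_mul, inter_comm, ← compl_eq_univ_sdiff, ← sdiff_eq_inter_compl]

theorem div_card_sdiff_nonneg_of_mem_corePoly (hπ : π ∈ CorePoly w) (S : Finset (Fin n)) :
    0 ≤ (w univ - w S - ∑ i ∈ univ \ S, π i) / (#(Wa \ S) : ℝ) :=
  div_nonneg (sub_nonneg.mpr (hπ.2 S)) (Nat.cast_nonneg _)

theorem add_ite_mem_mem_corePoly_iff (hπ : π ∈ CorePoly w) {Δ : ℝ} (hΔ : 0 ≤ Δ) :
    (fun i => π i + if i ∈ Wa then Δ else 0) ∈ CorePoly w ↔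
      ∀ S : Finset (Fin n), ¬ Wa ⊆ S →
        Δ ≤ (w univ - w S - ∑ i ∈ univ \ S, π i) / (#(Wa \ S) : ℝ) := by
  have hnonneg : ∀ i, 0 ≤ π i + if i ∈ Wa then Δ else 0 := fun i =>
    add_nonneg (hπ.1 i) (by split_ifs <;> simp [hΔ])
  simp only [CorePoly, Set.mem_ofPred_eq, hnonneg, implies_true, true_and,
    sum_compl_add_ite_mem]
  refine forall_congr' fun S => ?_
  by_cases hWS : Wa ⊆ S
  · simpa [sdiff_eq_empty_iff_subset.mpr hWS, hWS] using hπ.2 S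
  · have hcard : (0 : ℝ) < #(Wa \ S) := by
      exact_mod_cast card_pos.mpr (sdiff_nonempty.mpr hWS)
    rw [le_div_iff₀ hcard]
    simp only [hWS, not_false_eq_true, forall_const]
    constructor <;> intro h <;> linarith

theorem add_ite_mem_mem_corePoly_iff_le_inf' (hπ : π ∈ CorePoly w) {Δ : ℝ} (hΔ : 0 ≤ Δ)
    (h : (univ.filter fun S : Finset (Fin n) => ¬ Wa ⊆ S).Nonempty) :
    (fun i => π i + if i ∈ Wa then Δ else 0) ∈ CorePoly w ↔
      Δ ≤ (univ.filter fun S : Finset (Fin n) => ¬ Wa ⊆ S).inf' h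
        fun S => (w univ - w S - ∑ i ∈ univ \ S, π i) / (#(Wa \ S) : ℝ) := by
  simp only [add_ite_mem_mem_corePoly_iff hπ hΔ, le_inf'_iff, mem_filter, mem_univ, true_and]

end CorePoly

/-- The maximum feasible uniform utility increment on an active set equals the minimum
upper bound over the core constraints, and it is attained. -/
theorem max_increment_eq_min_upper_bound (n : ℕ) (w : Finset (Fin n) → ℝ)
    (π : Fin n → ℝ) (hπ : π ∈ CorePoly w)
    (Wa : Finset (Fin n)) (hWa : Wa.Nonempty) :
    IsGreatest
      {Δ : ℝ | 0 ≤ Δ ∧ (fun i => π i + if i ∈ Wa then Δ else 0) ∈ CorePoly w}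
      (Finset.inf'
        (Finset.filter (fun S : Finset (Fin n) => ¬ Wa ⊆ S) Finset.univ)
        ⟨∅, by simp [Finset.subset_empty, hWa.ne_empty]⟩
        (fun S => (w Finset.univ - w S - ∑ i ∈ Finset.univ \ S, π i) / ((Wa \ S).card : ℝ))) := by
  refine ⟨⟨?_, (add_ite_mem_mem_corePoly_iff_le_inf' hπ ?_ _).2 le_rfl⟩,
    fun Δ ⟨hΔ, hfeas⟩ => (add_ite_mem_mem_corePoly_iff_le_inf' hπ hΔ _).1 hfeas⟩ <;>
  exact le_inf' _ _ fun S _ => div_card_sdiff_nonneg_of_mem_corePoly hπ S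
end
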